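/- arXiv:1012.2635 — 3 statements merged into one kernel-verified Lean document; each statement's English description precedes it below -/
import Mathlib

section
/- Let p be a prime number and let S be a nonempty finite multiset over a type α, with ℓ(S) its cardinality. If the p-adic valuation of the rational number θ(S) = (−1)^{ℓ(S)−1}·(ℓ(S)−1)! / ∏_a (mult_S(a))! is negative (i.e., θ(S) is not p-integral), then p divides the multiplicity mult_S(a) of every element a of S; equivalently, S = p • A (the multiset in which every multiplicity of A is multiplied by p) for a unique multiset A. -/
/-! Write `S = a ::ₘ T` and `m = mult_S(a)`. Since `|Aut S| = m · |Aut T|` and `ℓ(T) = ℓ(S) - 1`,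
`θ(S) = ± ℓ(T)! / (m · |Aut T|) = ± c(T) / m`, where `c(T) = ℓ(T)! / |Aut T|` is the (integral)
number of permutations of `T`. So `θ(S)` is `p`-integral as soon as `p ∤ m` for a single `a ∈ S`. -/

/-- `|Aut S| = ∏_a (mult_S a)!` for a finite multiset `S`. -/
noncomputable def lmovAut {α : Type*} [DecidableEq α] (S : Multiset α) : ℚ :=
  ∏ a ∈ S.toFinset, (Nat.factorial (S.count a) : ℚ)

/-- `θ(S) = (−1)^{ℓ(S)−1} (ℓ(S)−1)! / |Aut S|`. -/
noncomputable def lmovTheta {α : Type*} [DecidableEq α] (S : Multiset α) : ℚ :=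
  (-1) ^ (Multiset.card S - 1) * (Nat.factorial (Multiset.card S - 1) : ℚ) / lmovAut S

open Nat

namespace Multiset

variable {α : Type*} [DecidableEq α]

theorem lmovAut_eq_prod_of_toFinset_subset {S : Multiset α} {s : Finset α}
    (h : S.toFinset ⊆ s) : lmovAut S = ∏ a ∈ s, ((S.count a)! : ℚ) :=
  Finset.prod_subset h fun a _ ha => by
    rw [count_eq_zero.mpr (mt mem_toFinset.mpr ha), factorial_zero, cast_one]

theorem lmovAut_cons (a : α) (T : Multiset α) :
    lmovAut (a ::ₘ T) = (T.count a + 1) * lmovAut T := by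
  have ha : a ∈ insert a T.toFinset := Finset.mem_insert_self a _
  have hrest : ∀ b ∈ (insert a T.toFinset).erase a,
      (((a ::ₘ T).count b)! : ℚ) = ((T.count b)! : ℚ) := fun b hb => by
    rw [count_cons_of_ne (Finset.ne_of_mem_erase hb)]
  rw [lmovAut, toFinset_cons, lmovAut_eq_prod_of_toFinset_subset (Finset.subset_insert a _),
    ← Finset.mul_prod_erase _ _ ha, ← Finset.mul_prod_erase _ _ ha, Finset.prod_congr rfl hrest,
    count_cons_self, factorial_succ, cast_mul, cast_succ, mul_assoc]

theorem lmovAut_mul_countPerms (T : Multiset α) : lmovAut T * T.countPerms = (card T)! := by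
  have hspec := Nat.multinomial_spec T.toFinset T.count
  rw [toFinset_sum_count_eq] at hspec
  rw [countPerms, Finsupp.multinomial_eq, toFinsupp_support, lmovAut, ← hspec]
  push_cast
  rfl

theorem lmovTheta_cons (a : α) (T : Multiset α) :
    lmovTheta (a ::ₘ T) = (-1) ^ card T * T.countPerms / (a ::ₘ T).count a := by
  have hAut : lmovAut T ≠ 0 := Finset.prod_ne_zero_iff.mpr fun _ _ => by positivity
  rw [lmovTheta, lmovAut_cons, card_cons, add_tsub_cancel_right, count_cons_self,
    ← lmovAut_mul_countPerms]
  push_cast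
  field_simp

end Multiset

open Multiset

theorem padicValRat_neg_one_pow_mul (p n : ℕ) (q : ℚ) :
    padicValRat p ((-1) ^ n * q) = padicValRat p q := by
  rcases neg_one_pow_eq_or ℚ n with h | h <;> simp [h, padicValRat.neg]

theorem padicValRat_lmovTheta_nonneg {α : Type*} [DecidableEq α] {p : ℕ} [Fact p.Prime]
    {S : Multiset α} {a : α} (ha : a ∈ S) (hp : ¬p ∣ S.count a) :
    0 ≤ padicValRat p (lmovTheta S) := by
  obtain ⟨T, rfl⟩ := exists_cons_of_mem ha
  have hcount : ((a ::ₘ T).count a : ℚ) ≠ 0 := by exact_mod_cast (count_pos.mpr ha).ne'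
  have hperms : (T.countPerms : ℚ) ≠ 0 := by exact_mod_cast (Nat.multinomial_pos _ _).ne'
  rw [lmovTheta_cons, mul_div_assoc, padicValRat_neg_one_pow_mul, padicValRat.div hperms hcount,
    padicValRat.of_nat, padicValRat.of_nat, padicValNat.eq_zero_of_not_dvd hp]
  simp

theorem stmt_0_general {α : Type*} [DecidableEq α] (p : ℕ) (hp : p.Prime)
    (S : Multiset α)
    (h : padicValRat p (lmovTheta S) < 0) :
    (∀ a ∈ S, p ∣ S.count a) ∧ ∃! A : Multiset α, S = p • A := by
  have : Fact p.Prime := ⟨hp⟩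
  have hdvd : ∀ a ∈ S, p ∣ S.count a := fun a ha => by
    by_contra hnd
    exact h.not_ge (padicValRat_lmovTheta_nonneg ha hnd)
  obtain ⟨A, hA⟩ := S.exists_smul_of_dvd_count hdvd
  exact ⟨hdvd, A, hA, fun B hB => nsmul_right_injective hp.ne_zero (hB.symm.trans hA)⟩

/-- If `θ(S)` is not `p`-integral then every multiplicity of `S` is divisible by `p`;
equivalently `S = p • A` for a unique multiset `A`. -/
theorem stmt_0 {α : Type*} [DecidableEq α] (p : ℕ) (hp : p.Prime)
    (S : Multiset α) (hS : S ≠ 0)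
    (h : padicValRat p (lmovTheta S) < 0) :
    (∀ a ∈ S, p ∣ S.count a) ∧ ∃! A : Multiset α, S = p • A :=
  stmt_0_general p hp S h
end

section
/- Let p be a prime number and let S be a nonempty finite multiset over a type α. Then the rational number θ(p • S) − θ(S)/p is p-integral, i.e., its p-adic valuation is nonnegative (or it is zero). Here p • S denotes the multiset in which the multiplicity of every element of S is multiplied by p. -/
/-!
Writing `M(S) = ℓ! / ∏ₐ mₐ!` for the multinomial coefficient (`Multiset.countPerms S`), one has
`θ(S) = -(-1)^ℓ M(S) / ℓ`, and `(-1)^ℓ M(S)` is the coefficient of `x^S` in `f^ℓ` for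
`f = -∑ₐ xₐ`. Over `ℤ`, `f^p ≡ f(x^p) mod p` (Frobenius), so lifting the exponent gives
`f^{pℓ} ≡ f(x^p)^ℓ mod p^{v_p(ℓ)+1}`. Comparing coefficients of `x^{pS}` yields
`(-1)^{pℓ} M(pS) ≡ (-1)^ℓ M(S) mod p^{v_p(ℓ)+1}`, and `θ(pS) - θ(S)/p` is minus this difference
divided by `pℓ`, whose valuation is `v_p(ℓ) + 1`.
-/

open MvPolynomial
open scoped Nat

theorem pow_padicValNat_succ_dvd_pow_sub_pow {R : Type*} [CommRing R] {p : ℕ} {a b : R}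
    (h : (p : R) ∣ a - b) (n : ℕ) : (p : R) ^ (padicValNat p n + 1) ∣ a ^ n - b ^ n := by
  obtain ⟨u, hu⟩ : p ^ padicValNat p n ∣ n := pow_padicValNat_dvd
  calc (p : R) ^ (padicValNat p n + 1)
      ∣ a ^ p ^ padicValNat p n - b ^ p ^ padicValNat p n := dvd_sub_pow_of_dvd_sub h _
    _ ∣ (a ^ p ^ padicValNat p n) ^ u - (b ^ p ^ padicValNat p n) ^ u := sub_dvd_pow_sub_pow _ _ u
    _ = a ^ n - b ^ n := by rw [← pow_mul, ← pow_mul, ← hu]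

theorem padicValRat_intCast_div_natCast_nonneg {p : ℕ} [Fact p.Prime] {z : ℤ} {m : ℕ}
    (h : (p : ℤ) ^ padicValNat p m ∣ z) : 0 ≤ padicValRat p (z / m) := by
  rcases eq_or_ne z 0 with rfl | hz
  · simp
  rcases eq_or_ne m 0 with rfl | hm
  · simp
  rw [padicValRat.div (by exact_mod_cast hz) (by exact_mod_cast hm), padicValRat.of_int,
    padicValRat.of_nat, sub_nonneg]
  exact_mod_cast ((padicValInt_dvd_iff _ _).1 h).resolve_left hz

namespace MvPolynomial

variable {σ : Type*}

theorem coeff_neg_sum_X_pow_degree {s : Finset σ} {d : σ →₀ ℕ} (hd : d.support ⊆ s) :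
    ((-∑ i ∈ s, X i : MvPolynomial σ ℤ) ^ d.degree).coeff d = (-1) ^ d.degree * d.multinomial := by
  set a := Finsupp.indicator s fun _ _ => (-1 : ℤ)
  have ha : ∀ i ∈ s, a i = -1 := fun i hi => Finsupp.indicator_of_mem hi _
  have hf : (-∑ i ∈ s, X i : MvPolynomial σ ℤ) = Finsupp.linearCombination ℤ X a := by
    rw [Finsupp.linearCombination_apply,
      Finsupp.sum_of_support_subset _ (Finsupp.support_indicator_subset _ _) _ (by simp),
      ← Finset.sum_neg_distrib]
    exact Finset.sum_congr rfl fun i hi => by rw [ha i hi, neg_one_smul]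
  have hprod : (d.prod fun r m => a r ^ m) = (-1) ^ d.degree :=
    (Finset.prod_congr rfl fun r hr => by simp only [ha r (hd hr)]).trans
      (Finset.prod_pow_eq_pow_sum _ _ _)
  rw [hf, coeff_linearCombination_X_pow,
    if_pos (show (d.sum fun _ m => m) = d.degree from rfl), hprod, mul_comm]

variable (p : ℕ) [Fact p.Prime]

theorem natCast_dvd_pow_sub_expand (f : MvPolynomial σ ℤ) :
    (p : MvPolynomial σ ℤ) ∣ f ^ p - expand p f := by
  rw [← map_natCast C, C_dvd_iff_zmod, map_sub, map_pow, map_expand, expand_zmod, sub_self]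

theorem pow_padicValNat_succ_dvd_coeff_pow_mul_sub (f : MvPolynomial σ ℤ) (d : σ →₀ ℕ) (n : ℕ) :
    (p : ℤ) ^ (padicValNat p n + 1) ∣ (f ^ (p * n)).coeff (p • d) - (f ^ n).coeff d := by
  have h := pow_padicValNat_succ_dvd_pow_sub_pow (natCast_dvd_pow_sub_expand p f) n
  rw [← pow_mul, ← map_pow (expand p) f n, ← map_natCast C, ← map_pow, C_dvd_iff_dvd_coeff] at h
  simpa only [coeff_sub, coeff_expand_smul p (Fact.out : p.Prime).ne_zero] using h (p • d)

end MvPolynomial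

section

variable {α : Type*} [DecidableEq α]

theorem Multiset.pow_padicValNat_succ_dvd_neg_one_pow_mul_countPerms_nsmul_sub (p : ℕ)
    [Fact p.Prime] (S : Multiset α) :
    (p : ℤ) ^ (padicValNat p (card S) + 1) ∣
      (-1) ^ (p * card S) * ((p • S).countPerms : ℤ) - (-1) ^ card S * (S.countPerms : ℤ) := by
  set d := toFinsupp S
  have hdeg : d.degree = card S := toFinsupp_sum_eq S
  have hpd : toFinsupp (p • S) = p • d := _root_.map_nsmul toFinsupp p S
  have hpdeg : (p • d).degree = p * card S := by rw [_root_.map_nsmul, hdeg, smul_eq_mul]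
  have h := pow_padicValNat_succ_dvd_coeff_pow_mul_sub p (-∑ i ∈ d.support, X i) d (card S)
  rw [← hpdeg, ← hdeg, coeff_neg_sum_X_pow_degree subset_rfl,
    coeff_neg_sum_X_pow_degree Finsupp.support_smul] at h
  rwa [countPerms, countPerms, hpd, ← hpdeg, ← hdeg]

theorem lmovTheta_eq {S : Multiset α} (hS : S ≠ 0) :
    lmovTheta S = -((-1) ^ Multiset.card S * S.countPerms) / Multiset.card S := by
  have hAut : lmovAut S * S.countPerms = (Multiset.card S)! := by
    have hspec := Nat.multinomial_spec S.toFinset S.count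
    rw [Multiset.toFinset_sum_count_eq] at hspec
    rw [lmovAut, ← Nat.cast_prod]
    exact_mod_cast hspec
  have hAut0 : lmovAut S ≠ 0 := Finset.prod_ne_zero_iff.mpr fun a _ => by positivity
  obtain ⟨k, hk⟩ := Nat.exists_eq_add_one_of_ne_zero (Multiset.card_pos.mpr hS).ne'
  rw [lmovTheta, hk, Nat.add_sub_cancel, eq_div_iff (by positivity), div_mul_eq_mul_div,
    div_eq_iff hAut0]
  rw [hk, Nat.factorial_succ] at hAut
  push_cast at hAut ⊢
  linear_combination -(-1) ^ k * hAut

end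

/-- For a prime `p` and a nonempty finite multiset `S`, the rational number
`θ(p • S) − θ(S)/p` is `p`-integral: its `p`-adic valuation is nonnegative
(recall `padicValRat p 0 = 0`). -/
theorem stmt_1 {α : Type*} [DecidableEq α] (p : ℕ) (hp : p.Prime)
    (S : Multiset α) (hS : S ≠ 0) :
    0 ≤ padicValRat p (lmovTheta (p • S) - lmovTheta S / p) := by
  have := Fact.mk hp
  have hℓ : Multiset.card S ≠ 0 := (Multiset.card_pos.mpr hS).ne'
  have hpS : p • S ≠ 0 := by simpa [hp.ne_zero] using hS
  rw [lmovTheta_eq hS, lmovTheta_eq hpS, Multiset.card_nsmul]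
  set ℓ := Multiset.card S
  set N : ℤ := (-1) ^ (p * ℓ) * ((p • S).countPerms : ℤ) - (-1) ^ ℓ * (S.countPerms : ℤ) with hN
  have hθ : -((-1) ^ (p * ℓ) * ((p • S).countPerms : ℚ)) / ↑(p * ℓ)
      - -((-1) ^ ℓ * (S.countPerms : ℚ)) / ℓ / p = ((-N : ℤ) : ℚ) / ((p * ℓ : ℕ) : ℚ) := by
    rw [hN]
    push_cast
    field_simp
    ring
  rw [hθ]
  apply padicValRat_intCast_div_natCast_nonneg
  rw [padicValNat.mul hp.ne_zero hℓ, padicValNat.self hp.one_lt, add_comm, dvd_neg]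
  exact Multiset.pow_padicValNat_succ_dvd_neg_one_pow_mul_countPerms_nsmul_sub p S
end

section
/- Let p be a prime, σ and ι types, g : ι → MvPolynomial σ ℤ a family of multivariable polynomials with integer coefficients, and S a nonempty finite multiset over ι. Then every coefficient of the polynomial θ(p • S) · ∏_{a ∈ S} (g a)^p − (θ(S)/p) · ∏_{a ∈ S} (expand p (g a)) ∈ MvPolynomial σ ℚ is p-integral, where expand p substitutes x_i^p for each variable x_i, and the products are taken with multiplicity over S. -/
open MvPolynomial

/-!
Put `ℓ = ℓ(S)` and `u = ∑_{a ∈ S} g_a X_a`, a linear form in new variables `X_a` over `ℤ[σ]`,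
and let `F(u) = ∑ (expand p g_a) X_a^p` be its Frobenius lift, so that `u^p ≡ F(u) mod p`.
Lifting the exponent gives `u^{pℓ} ≡ F(u)^ℓ mod p^{v_p(ℓ)+1}`. By the multinomial theorem the
coefficients of `X^{p•S}` on the two sides are `countPerms (p•S) · ∏ g_a^p` and
`countPerms S · ∏ expand p g_a`. Since `ℓ θ(S) = -(-1)^ℓ countPerms S`, multiplying the
expression of the theorem by `pℓ` yields exactly this difference of coefficients (for `-g`
instead of `g`), which is divisible by `p^{v_p(pℓ)}`.
-/

theorem pow_padicValNat_succ_dvd_pow_mul_sub_pow {R : Type*} [CommRing R] {p : ℕ} {x y : R}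
    (h : (p : R) ∣ x ^ p - y) (n : ℕ) :
    (p : R) ^ (padicValNat p n + 1) ∣ x ^ (p * n) - y ^ n := by
  obtain ⟨k, hk⟩ : p ^ padicValNat p n ∣ n := pow_padicValNat_dvd
  calc (p : R) ^ (padicValNat p n + 1)
      ∣ (x ^ p) ^ p ^ padicValNat p n - y ^ p ^ padicValNat p n := dvd_sub_pow_of_dvd_sub h _
    _ ∣ ((x ^ p) ^ p ^ padicValNat p n) ^ k - (y ^ p ^ padicValNat p n) ^ k :=
      sub_dvd_pow_sub_pow _ _ k
    _ = x ^ (p * n) - y ^ n := by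
      conv_rhs => rw [hk]
      ring

theorem padicValRat_nonneg_of_natCast_mul_eq_intCast {p k : ℕ} [Fact p.Prime] {x : ℚ} {z : ℤ}
    (hk : k ≠ 0) (hx : (k : ℚ) * x = z) (hz : (p : ℤ) ^ padicValNat p k ∣ z) :
    0 ≤ padicValRat p x := by
  rcases eq_or_ne z 0 with rfl | hz0
  · obtain rfl : x = 0 := by simpa [hk] using hx
    simp
  rw [eq_div_of_mul_eq (by exact_mod_cast hk) ((mul_comm _ _).trans hx),
    padicValRat.div (by exact_mod_cast hz0) (by exact_mod_cast hk), padicValRat.of_int,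
    padicValRat.of_nat]
  have := ((padicValInt_dvd_iff _ z).mp hz).resolve_left hz0
  omega

section Polynomial

variable {σ ι : Type*}

theorem natCast_pow_dvd_coeff {R : Type*} [CommSemiring R] {p k : ℕ} {F : MvPolynomial σ R}
    (h : (p : MvPolynomial σ R) ^ k ∣ F) (m : σ →₀ ℕ) : (p : R) ^ k ∣ coeff m F := by
  rw [← map_natCast (C : R →+* MvPolynomial σ R), ← map_pow] at h
  exact (C_dvd_iff_dvd_coeff _ _).mp h m

theorem coeff_toFinsupp_sum_C_mul_X_pow {R : Type*} [CommSemiring R] [DecidableEq ι]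
    (S : Multiset ι) (f : ι → R) :
    coeff (Multiset.toFinsupp S) ((∑ a ∈ S.toFinset, C (f a) * X a) ^ Multiset.card S) =
      S.countPerms * (S.map f).prod := by
  set w := Finsupp.indicator S.toFinset fun a _ => f a
  have hw : ∑ a ∈ S.toFinset, C (f a) * X a = Finsupp.linearCombination R X w := by
    rw [Finsupp.linearCombination_apply_of_mem_supported R (s := S.toFinset)
      (Finsupp.support_indicator_subset _ _)]
    refine Finset.sum_congr rfl fun a ha => ?_
    rw [Finsupp.indicator_of_mem ha, smul_eq_C_mul]
  rw [hw, coeff_linearCombination_X_pow, if_pos (by exact Multiset.toFinsupp_sum_eq S),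
    Finset.prod_multiset_map_count, Finsupp.prod, Multiset.toFinsupp_support]
  refine congrArg _ (Finset.prod_congr rfl fun a ha => ?_)
  rw [Finsupp.indicator_of_mem ha, Multiset.toFinsupp_apply]

theorem natCast_dvd_iff_map_map_zmod (p : ℕ) (F : MvPolynomial ι (MvPolynomial σ ℤ)) :
    (p : MvPolynomial ι (MvPolynomial σ ℤ)) ∣ F ↔
      map (map (Int.castRingHom (ZMod p))) F = 0 := by
  rw [show (p : MvPolynomial ι (MvPolynomial σ ℤ)) = C (C (p : ℤ)) by simp]
  exact C_dvd_iff_map_hom_eq_zero _ _ (fun r => (C_dvd_iff_zmod p r).symm) F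

/-- Expanding both the variables and the coefficients is a Frobenius lift. -/
theorem natCast_dvd_pow_sub_expand_map_expand (p : ℕ) [Fact p.Prime]
    (F : MvPolynomial ι (MvPolynomial σ ℤ)) :
    (p : MvPolynomial ι (MvPolynomial σ ℤ)) ∣ F ^ p - expand p (map (expand p).toRingHom F) := by
  have hfrob : (map (Int.castRingHom (ZMod p))).comp (expand p).toRingHom =
      (frobenius (MvPolynomial σ (ZMod p)) p).comp (map (Int.castRingHom (ZMod p))) := by
    refine RingHom.ext fun f => ?_
    simp [map_expand, frobenius_zmod]
  rw [natCast_dvd_iff_map_map_zmod, map_sub, map_pow, sub_eq_zero, map_expand, map_map, hfrob,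
    ← map_map, ← map_expand, map_frobenius_expand]

variable [DecidableEq ι]

noncomputable def frobeniusDefect {R : Type*} [CommRing R] (p : ℕ) (S : Multiset ι)
    (f : ι → MvPolynomial σ R) : MvPolynomial σ R :=
  (p • S).countPerms * (S.map f).prod ^ p - S.countPerms * expand p (S.map f).prod

theorem pow_padicValNat_card_succ_dvd_frobeniusDefect (p : ℕ) [Fact p.Prime]
    (S : Multiset ι) (f : ι → MvPolynomial σ ℤ) :
    (p : MvPolynomial σ ℤ) ^ (padicValNat p (Multiset.card S) + 1) ∣ frobeniusDefect p S f := by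
  have hp : p ≠ 0 := (Fact.out : p.Prime).ne_zero
  set u : MvPolynomial ι (MvPolynomial σ ℤ) := ∑ a ∈ S.toFinset, C (f a) * X a with hu₀
  have hdvd := natCast_pow_dvd_coeff (pow_padicValNat_succ_dvd_pow_mul_sub_pow
    (natCast_dvd_pow_sub_expand_map_expand p u) (Multiset.card S)) (Multiset.toFinsupp (p • S))
  have hu : coeff (Multiset.toFinsupp (p • S)) (u ^ (p * Multiset.card S)) =
      (p • S).countPerms * (S.map f).prod ^ p := by
    rw [hu₀, ← Multiset.card_nsmul, ← Multiset.toFinset_nsmul S p hp,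
      coeff_toFinsupp_sum_C_mul_X_pow, Multiset.map_nsmul, Multiset.prod_nsmul]
  have hv : coeff (Multiset.toFinsupp (p • S))
      (expand p (map (expand p).toRingHom u) ^ Multiset.card S) =
      S.countPerms * expand p (S.map f).prod := by
    rw [← map_pow, ← map_pow, map_nsmul, coeff_expand_smul p hp, coeff_map,
      coeff_toFinsupp_sum_C_mul_X_pow]
    simp
  rwa [coeff_sub, hu, hv] at hdvd

end Polynomial

section Theta

variable {σ ι : Type*} [DecidableEq ι]

theorem lmovAut_mul_countPerms (S : Multiset ι) :
    lmovAut S * S.countPerms = (Multiset.card S).factorial := by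
  have h := Nat.multinomial_spec S.toFinset (S.count ·)
  rw [Multiset.toFinset_sum_count_eq] at h
  rw [lmovAut, Multiset.countPerms, Finsupp.multinomial_eq, Multiset.toFinsupp_support]
  exact_mod_cast h

theorem natCast_card_mul_lmovTheta {S : Multiset ι} (hS : S ≠ 0) :
    (Multiset.card S : ℚ) * lmovTheta S = -(-1) ^ Multiset.card S * S.countPerms := by
  obtain ⟨n, hn⟩ := Nat.exists_eq_add_one_of_ne_zero (Multiset.card_pos.mpr hS).ne'
  have hAut : lmovAut S ≠ 0 := Finset.prod_ne_zero_iff.mpr fun _ _ => by positivity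
  have h := lmovAut_mul_countPerms S
  rw [hn, Nat.factorial_succ] at h
  rw [lmovTheta, hn, Nat.add_sub_cancel]
  field_simp
  push_cast at h ⊢
  linear_combination -(-1) ^ n * h

/-- Passing from `g` to `-g` absorbs the signs `(-1)^{ℓ-1}` of `θ`. -/
theorem C_mul_lmovTheta_sub_eq_neg_map_frobeniusDefect {p : ℕ} (hp : p ≠ 0) {S : Multiset ι}
    (hS : S ≠ 0) (g : ι → MvPolynomial σ ℤ) :
    C ((p * Multiset.card S : ℕ) : ℚ) *
        (C (lmovTheta (p • S)) * (S.map fun a => (map (Int.castRingHom ℚ) (g a)) ^ p).prod -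
          C (lmovTheta S / p) * (S.map fun a => expand p (map (Int.castRingHom ℚ) (g a))).prod) =
      -map (Int.castRingHom ℚ) (frobeniusDefect p S fun a => -g a) := by
  have hθp : ((p * Multiset.card S : ℕ) : ℚ) * lmovTheta (p • S) =
      -(-1) ^ (p * Multiset.card S) * (p • S).countPerms := by
    rw [← Multiset.card_nsmul, natCast_card_mul_lmovTheta (by simpa [hp] using hS)]
  have hθ : ((p * Multiset.card S : ℕ) : ℚ) * (lmovTheta S / p) =
      -(-1) ^ Multiset.card S * S.countPerms := by
    rw [← natCast_card_mul_lmovTheta hS]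
    field_simp
    push_cast
    ring
  have hneg : (S.map fun a => -g a).prod = (-1) ^ Multiset.card S * (S.map g).prod := by
    rw [show (fun a => -g a) = Neg.neg ∘ g from rfl, ← Multiset.map_map, Multiset.prod_map_neg,
      Multiset.card_map]
  rw [frobeniusDefect, hneg, mul_sub, ← mul_assoc, ← mul_assoc, ← C_mul, ← C_mul, hθp, hθ]
  simp only [map_neg, map_mul, map_sub, map_pow, map_one, map_natCast, map_multiset_prod,
    Multiset.map_map, Function.comp_def, map_expand, Multiset.prod_map_pow]
  ring

end Theta

/-- Every coefficient of
`θ(p•S) ⬝ ∏_{a ∈ S} (g a)^p − (θ(S)/p) ⬝ ∏_{a ∈ S} expand p (g a)`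
is `p`-integral (the products are taken with multiplicity over `S`, and the
integer polynomials `g a` are viewed in `MvPolynomial σ ℚ`). -/
theorem stmt_2 {σ ι : Type*} [DecidableEq ι] (p : ℕ) (hp : p.Prime)
    (g : ι → MvPolynomial σ ℤ) (S : Multiset ι) (hS : S ≠ 0) :
    ∀ m : σ →₀ ℕ,
      0 ≤ padicValRat p
        (MvPolynomial.coeff m
          (C (lmovTheta (p • S)) *
              (S.map fun a => (MvPolynomial.map (Int.castRingHom ℚ) (g a)) ^ p).prod
            - C (lmovTheta S / p) *
              (S.map fun a =>
                MvPolynomial.expand p (MvPolynomial.map (Int.castRingHom ℚ) (g a))).prod)) := by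
  intro m
  have := Fact.mk hp
  have hS' : Multiset.card S ≠ 0 := (Multiset.card_pos.mpr hS).ne'
  have hdvd := natCast_pow_dvd_coeff
    (pow_padicValNat_card_succ_dvd_frobeniusDefect p S fun a => -g a) m
  refine padicValRat_nonneg_of_natCast_mul_eq_intCast
    (z := -coeff m (frobeniusDefect p S fun a => -g a)) (mul_ne_zero hp.ne_zero hS') ?_ ?_
  · rw [← coeff_C_mul, C_mul_lmovTheta_sub_eq_neg_map_frobeniusDefect hp.ne_zero hS, coeff_neg,
      coeff_map]
    simp
  · rwa [padicValNat.mul hp.ne_zero hS', padicValNat.self hp.one_lt, add_comm, dvd_neg]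
end
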